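/- arXiv:1304.7206 — 6 statements merged into one kernel-verified Lean document; each statement's English description precedes it below -/
import Mathlib

section
/- For every b > 0, ∫_{ℝ²} e^{-b‖x‖}(b sin ‖x‖ + cos ‖x‖) dx = 2π (3b² − 1)/(1 + b²)². In particular, for 0 < b < 1/√3 this integral is strictly negative, i.e. the value at k = 0 of the Fourier transform of the connectivity kernel is negative, so the kernel is globally inhibitory (this covers the paper's choice b = 0.4). -/
/-!
The kernel is the real part of `(1 - b i) e^{-(b - i) r}`, so in polar coordinates the integral is
`2π Re ((1 - b i) ∫₀^∞ r e^{-(b - i) r} dr) = 2π Re ((1 - b i) / (b - i)²)`, and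
`(1 - b i) / (b - i)² = ((3b² - 1) + (3b - b³) i) / (1 + b²)²`.
-/

open MeasureTheory Real Set Filter Topology
open Complex (I)

lemma integral_fun_norm_euclideanSpace_fin_two {E : Type*} [NormedAddCommGroup E]
    [NormedSpace ℝ E] (f : ℝ → E) :
    ∫ x : EuclideanSpace ℝ (Fin 2), f ‖x‖ = (2 * π) • ∫ r in Ioi 0, r • f r := by
  have hball : volume.real (Metric.ball (0 : EuclideanSpace ℝ (Fin 2)) 1) = π := by
    simp [measureReal_def, EuclideanSpace.volume_ball, Real.sq_sqrt pi_nonneg, one_add_one_eq_two,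
      pi_nonneg]
  rw [integral_fun_norm_addHaar, finrank_euclideanSpace_fin, hball, ← Nat.cast_smul_eq_nsmul ℝ,
    smul_smul]
  norm_num

namespace Complex

variable {a : ℂ}

lemma integrableOn_Ioi_mul_exp_mul (ha : a.re < 0) :
    IntegrableOn (fun t : ℝ => t * exp (a * t)) (Ioi 0) := by
  refine (integrable_norm_iff (by fun_prop : Continuous _).aestronglyMeasurable).mp ?_
  refine ((integrableOn_rpow_mul_exp_neg_mul_rpow (s := 1) (p := 1) (by norm_num) one_pos
    (neg_pos.mpr ha))).congr_fun (fun t (ht : 0 < t) => ?_) measurableSet_Ioi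
  simp [norm_exp, abs_of_pos ht]

lemma tendsto_mul_exp_mul_atTop (ha : a.re < 0) :
    Tendsto (fun t : ℝ => t * exp (a * t)) atTop (𝓝 0) := by
  refine tendsto_zero_iff_norm_tendsto_zero.mpr ?_
  refine (tendsto_rpow_mul_exp_neg_mul_atTop_nhds_zero 1 _ (neg_pos.mpr ha)).congr' ?_
  filter_upwards [eventually_gt_atTop 0] with t ht
  simp [norm_exp, abs_of_pos ht]

lemma tendsto_exp_mul_atTop (ha : a.re < 0) :
    Tendsto (fun t : ℝ => exp (a * t)) atTop (𝓝 0) := by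
  simpa [tendsto_exp_nhds_zero_iff] using tendsto_const_nhds.neg_mul_atTop ha tendsto_id

lemma integral_Ioi_mul_exp_mul (ha : a.re < 0) :
    ∫ t in Ioi (0 : ℝ), t * exp (a * t) = 1 / a ^ 2 := by
  have ha0 : a ≠ 0 := by rintro rfl; simp at ha
  have hderiv : ∀ t ∈ Ici (0 : ℝ),
      HasDerivAt (fun t : ℝ => (t / a - 1 / a ^ 2) * exp (a * t)) (t * exp (a * t)) t := by
    intro t _
    have := (((hasDerivAt_id' (t : ℂ)).div_const a).sub_const (1 / a ^ 2)).fun_mul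
      (((hasDerivAt_id' (t : ℂ)).const_mul a).cexp)
    convert this.comp_ofReal using 1
    field_simp
    ring
  have hlim : Tendsto (fun t : ℝ => (t / a - 1 / a ^ 2) * exp (a * t)) atTop (𝓝 0) := by
    have := ((tendsto_mul_exp_mul_atTop ha).div_const a).sub
      ((tendsto_exp_mul_atTop ha).const_mul (1 / a ^ 2))
    simp only [zero_div, mul_zero, sub_zero] at this
    refine this.congr fun t => ?_
    ring
  rw [integral_Ioi_of_hasDerivAt_of_tendsto' hderiv (integrableOn_Ioi_mul_exp_mul ha) hlim]
  simp

end Complex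

lemma exp_mul_sin_add_cos_eq_re (b r : ℝ) :
    rexp (-b * r) * (b * sin r + cos r) = ((1 - b * I) * Complex.exp ((-b + I) * r)).re := by
  simp [Complex.mul_re, Complex.exp_re, Complex.exp_im]
  ring

lemma re_one_sub_mul_I_div_sq (b : ℝ) :
    ((1 - b * I) / (-b + I) ^ 2).re = (3 * b ^ 2 - 1) / (1 + b ^ 2) ^ 2 := by
  have hden : (-b + I : ℂ) ^ 2 ≠ 0 :=
    pow_ne_zero _ fun h => by simpa using congrArg Complex.im h
  have hb : (1 + b ^ 2 : ℂ) ≠ 0 := by exact_mod_cast (by positivity : (1 + b ^ 2 : ℝ) ≠ 0)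
  have hquot : (1 - b * I) / (-b + I) ^ 2
      = (3 * b ^ 2 - 1 + (3 * b - b ^ 3) * I : ℂ) / (1 + b ^ 2) ^ 2 := by
    rw [div_eq_div_iff hden (pow_ne_zero _ hb)]
    ring_nf
    simp only [Complex.I_sq, Complex.I_pow_three]
    ring
  rw [hquot, show (1 + (b : ℂ) ^ 2) ^ 2 = ((1 + b ^ 2) ^ 2 : ℝ) by push_cast; rfl,
    Complex.div_ofReal_re]
  simp [← Complex.ofReal_pow]

lemma integral_Ioi_mul_exp_mul_sin_add_cos {b : ℝ} (hb : 0 < b) :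
    ∫ r in Ioi (0 : ℝ), r • (rexp (-b * r) * (b * sin r + cos r))
      = (3 * b ^ 2 - 1) / (1 + b ^ 2) ^ 2 := by
  have ha : (-b + I).re < 0 := by simpa using hb
  have hint := (Complex.integrableOn_Ioi_mul_exp_mul ha).const_mul (1 - b * I)
  calc ∫ r in Ioi (0 : ℝ), r • (rexp (-b * r) * (b * sin r + cos r))
      = ∫ r in Ioi (0 : ℝ), ((1 - b * I) * (r * Complex.exp ((-b + I) * r))).re := by
        refine setIntegral_congr_fun measurableSet_Ioi fun r _ => ?_
        rw [exp_mul_sin_add_cos_eq_re, mul_left_comm, Complex.re_ofReal_mul, smul_eq_mul]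
    _ = ((1 - b * I) / (-b + I) ^ 2).re := by
        refine (integral_re hint).trans ?_
        rw [integral_const_mul, Complex.integral_Ioi_mul_exp_mul ha, mul_one_div,
          RCLike.re_to_complex]
    _ = (3 * b ^ 2 - 1) / (1 + b ^ 2) ^ 2 := re_one_sub_mul_I_div_sq b

lemma three_mul_sq_sub_one_neg {b : ℝ} (hb : 0 < b) (h : b < 1 / √3) : 3 * b ^ 2 - 1 < 0 := by
  have hsq : b ^ 2 < (1 / √3) ^ 2 := pow_lt_pow_left₀ h hb.le two_ne_zero
  rw [div_pow, one_pow, sq_sqrt (by norm_num)] at hsq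
  linarith

/-- For every `b > 0`,
`∫_{ℝ²} e^{-b‖x‖}(b sin ‖x‖ + cos ‖x‖) dx = 2π (3b² − 1)/(1 + b²)²`; in particular for
`0 < b < 1/√3` the integral (the Fourier transform of the kernel at `k = 0`) is strictly
negative, so the kernel is globally inhibitory. -/
theorem stmt2 (b : ℝ) (hb : 0 < b)
    (W : EuclideanSpace ℝ (Fin 2) → ℝ)
    (hW : ∀ x, W x = Real.exp (-b * ‖x‖) * (b * Real.sin ‖x‖ + Real.cos ‖x‖)) :
    (∫ x, W x) = 2 * Real.pi * (3 * b ^ 2 - 1) / (1 + b ^ 2) ^ 2 ∧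
    (b < 1 / Real.sqrt 3 → (∫ x, W x) < 0) := by
  have hval : (∫ x, W x) = 2 * π * (3 * b ^ 2 - 1) / (1 + b ^ 2) ^ 2 := by
    simp_rw [hW]
    rw [integral_fun_norm_euclideanSpace_fin_two (fun r => rexp (-b * r) * (b * sin r + cos r)),
      integral_Ioi_mul_exp_mul_sin_add_cos hb, smul_eq_mul, mul_div_assoc]
  refine ⟨hval, fun hsmall => ?_⟩
  rw [hval]
  exact div_neg_of_neg_of_pos
    (mul_neg_of_pos_of_neg (by positivity) (three_mul_sq_sub_one_neg hb hsmall)) (by positivity)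
end

section
/- Let W : ℝ² → ℝ be integrable, let μ, θ > 0 and let S be the firing-rate function. Then for every p ∈ [1, ∞] and all measurable u, v : ℝ² → ℝ, the L^p-norm estimate ‖W ⋆ (S∘u) − W ⋆ (S∘v)‖_{L^p} ≤ (μ/4) ‖W‖_{L¹} ‖u − v‖_{L^p} holds (with the convention that the right-hand side is ∞ when ‖u−v‖_{L^p} = ∞). In particular the nonlinear operator u ↦ W ⋆ (S∘u) is globally Lipschitz on L^p(ℝ²) with constant (μ/4)‖W‖_{L¹}. -/
/-!
Writing `S(t) = σ(μt - θ) - σ(-θ)` with the logistic function `σ`, whose derivative `σ(1 - σ)` is at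
most `1/4`, shows that `S` is bounded and `(μ/4)`-Lipschitz. Boundedness makes both convolutions
absolutely convergent, so their difference is `W ⋆ (S∘u - S∘v)`, and Young's inequality
`‖W ⋆ g‖_p ≤ ‖W‖_1 ‖g‖_p` together with `|S∘u - S∘v| ≤ (μ/4)|u - v|` gives the bound. For finite
`p`, Young's inequality follows from Hölder's inequality in the form
`(∫ w h)^p ≤ (∫ w)^(p-1) ∫ w h^p`, applied pointwise in `x` with the weight `w = |W(x - ·)|`,
followed by Tonelli and the translation invariance of the measure.
-/

open MeasureTheory Real
open scoped ENNReal NNReal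

theorem rpow_lintegral_mul_le {α : Type*} [MeasurableSpace α] {ν : Measure α}
    {w h : α → ℝ≥0∞} (hw : AEMeasurable w ν) (hh : AEMeasurable h ν) {r : ℝ} (hr : 1 ≤ r) :
    (∫⁻ a, w a * h a ∂ν) ^ r ≤ (∫⁻ a, w a ∂ν) ^ (r - 1) * ∫⁻ a, w a * h a ^ r ∂ν := by
  have hr0 : 0 < r := zero_lt_one.trans_le hr
  have hsplit : ∀ a, w a ^ (1 - r⁻¹) * (w a * h a ^ r) ^ r⁻¹ = w a * h a := fun a => by
    rw [ENNReal.mul_rpow_of_nonneg _ _ (by positivity), ← ENNReal.rpow_mul,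
      mul_inv_cancel₀ hr0.ne', ENNReal.rpow_one, ← mul_assoc,
      ← ENNReal.rpow_add_of_nonneg _ _ (sub_nonneg.2 (inv_le_one_of_one_le₀ hr)) (by positivity),
      sub_add_cancel, ENNReal.rpow_one]
  have holder := ENNReal.lintegral_mul_norm_pow_le hw (hw.mul (hh.pow_const r))
    (sub_nonneg.2 (inv_le_one_of_one_le₀ hr)) (inv_nonneg.2 hr0.le) (sub_add_cancel 1 r⁻¹)
  simp only [Pi.mul_apply, hsplit] at holder
  calc (∫⁻ a, w a * h a ∂ν) ^ r
      ≤ ((∫⁻ a, w a ∂ν) ^ (1 - r⁻¹) * (∫⁻ a, w a * h a ^ r ∂ν) ^ r⁻¹) ^ r := by gcongr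
    _ = (∫⁻ a, w a ∂ν) ^ (r - 1) * ∫⁻ a, w a * h a ^ r ∂ν := by
      rw [ENNReal.mul_rpow_of_nonneg _ _ hr0.le, ← ENNReal.rpow_mul, ← ENNReal.rpow_mul,
        inv_mul_cancel₀ hr0.ne', ENNReal.rpow_one, sub_mul, one_mul, inv_mul_cancel₀ hr0.ne']

section Convolution

variable {G : Type*} [AddCommGroup G] [MeasurableSpace G] [MeasurableAdd₂ G] [MeasurableNeg G]
  {μ : Measure G} [SFinite μ] [μ.IsAddLeftInvariant]

theorem aemeasurable_comp_sub_mul {f h : G → ℝ≥0∞} (hf : AEMeasurable f μ)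
    (hh : AEMeasurable h μ) :
    AEMeasurable (fun z : G × G => f (z.1 - z.2) * h z.2) (μ.prod μ) :=
  (hf.comp_quasiMeasurePreserving (quasiMeasurePreserving_sub μ μ)).mul hh.comp_snd

theorem lintegral_lintegral_comp_sub_mul {f h : G → ℝ≥0∞} (hf : AEMeasurable f μ)
    (hh : AEMeasurable h μ) :
    ∫⁻ x, ∫⁻ y, f (x - y) * h y ∂μ ∂μ = (∫⁻ x, f x ∂μ) * ∫⁻ y, h y ∂μ := by
  rw [lintegral_lintegral_swap (aemeasurable_comp_sub_mul hf hh)]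
  have hinner : ∀ y, ∫⁻ x, f (x - y) * h y ∂μ = (∫⁻ x, f x ∂μ) * h y := fun y => by
    have hfy : AEMeasurable (fun x => f (x - y)) μ :=
      hf.comp_quasiMeasurePreserving (measurePreserving_sub_right μ y).quasiMeasurePreserving
    rw [lintegral_mul_const'' _ hfy, lintegral_sub_right_eq_self]
  simp_rw [hinner]
  exact lintegral_const_mul'' _ hh

theorem eLpNorm_lintegral_comp_sub_mul_le [μ.IsNegInvariant] {f g : G → ℝ≥0∞}
    (hf : AEMeasurable f μ) (hg : AEMeasurable g μ) {p : ℝ≥0∞} (hp : 1 ≤ p) :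
    eLpNorm (fun x => ∫⁻ y, f (x - y) * g y ∂μ) p μ ≤ (∫⁻ x, f x ∂μ) * eLpNorm g p μ := by
  have hfx : ∀ x, AEMeasurable (fun y => f (x - y)) μ := fun x =>
    hf.comp_quasiMeasurePreserving (quasiMeasurePreserving_sub_left μ x)
  rcases eq_or_ne p ∞ with rfl | hp_top
  · rw [eLpNorm_exponent_top, eLpNorm_exponent_top]
    refine essSup_le_of_ae_le _ (.of_forall fun x => ?_)
    have hg_le : ∀ᵐ y ∂μ, ‖g y‖ₑ ≤ eLpNormEssSup g μ := enorm_ae_le_eLpNormEssSup g μ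
    calc ‖∫⁻ y, f (x - y) * g y ∂μ‖ₑ = ∫⁻ y, f (x - y) * g y ∂μ := enorm_eq_self _
      _ ≤ ∫⁻ y, f (x - y) * eLpNormEssSup g μ ∂μ :=
        lintegral_mono_ae (hg_le.mono fun y hy => by gcongr; exact hy)
      _ = (∫⁻ x, f x ∂μ) * eLpNormEssSup g μ := by
        rw [lintegral_mul_const'' _ (hfx x), lintegral_sub_left_eq_self]
  set r := p.toReal
  have hr : 1 ≤ r := by simpa using ENNReal.toReal_mono hp_top hp
  have hr0 : 0 < r := zero_lt_one.trans_le hr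
  set A := ∫⁻ x, f x ∂μ
  rw [eLpNorm_eq_lintegral_rpow_enorm_toReal (zero_lt_one.trans_le hp).ne' hp_top,
    eLpNorm_eq_lintegral_rpow_enorm_toReal (zero_lt_one.trans_le hp).ne' hp_top]
  simp only [enorm_eq_self]
  calc (∫⁻ x, (∫⁻ y, f (x - y) * g y ∂μ) ^ r ∂μ) ^ (1 / r)
      ≤ (∫⁻ x, A ^ (r - 1) * ∫⁻ y, f (x - y) * g y ^ r ∂μ ∂μ) ^ (1 / r) := by
        gcongr with x
        simpa only [lintegral_sub_left_eq_self] using rpow_lintegral_mul_le (hfx x) hg hr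
    _ = (A ^ (r - 1) * A ^ (1 : ℝ) * ∫⁻ y, g y ^ r ∂μ) ^ (1 / r) := by
        rw [lintegral_const_mul'' _
            (aemeasurable_comp_sub_mul hf (hg.pow_const r)).lintegral_prod_right',
          lintegral_lintegral_comp_sub_mul hf (hg.pow_const r), ENNReal.rpow_one, mul_assoc]
    _ = A * (∫⁻ y, g y ^ r ∂μ) ^ (1 / r) := by
        rw [← ENNReal.rpow_add_of_nonneg _ _ (by linarith) zero_le_one, sub_add_cancel,
          ENNReal.mul_rpow_of_nonneg _ _ (by positivity), ← ENNReal.rpow_mul,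
          mul_one_div_cancel hr0.ne', ENNReal.rpow_one]

theorem eLpNorm_integral_comp_sub_mul_le {𝕜 : Type*} [RCLike 𝕜] [μ.IsNegInvariant] {f g : G → 𝕜}
    (hf : AEStronglyMeasurable f μ) (hg : AEStronglyMeasurable g μ) {p : ℝ≥0∞} (hp : 1 ≤ p) :
    eLpNorm (fun x => ∫ y, f (x - y) * g y ∂μ) p μ ≤ eLpNorm f 1 μ * eLpNorm g p μ :=
  calc eLpNorm (fun x => ∫ y, f (x - y) * g y ∂μ) p μ
      ≤ eLpNorm (fun x => ∫⁻ y, ‖f (x - y)‖ₑ * ‖g y‖ₑ ∂μ) p μ := eLpNorm_mono_enorm fun x => by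
        simpa only [enorm_mul, enorm_eq_self] using
          enorm_integral_le_lintegral_enorm (fun y => f (x - y) * g y)
    _ ≤ (∫⁻ x, ‖f x‖ₑ ∂μ) * eLpNorm (fun y => ‖g y‖ₑ) p μ :=
        eLpNorm_lintegral_comp_sub_mul_le hf.enorm hg.enorm hp
    _ = eLpNorm f 1 μ * eLpNorm g p μ := by rw [eLpNorm_one_eq_lintegral_enorm, eLpNorm_enorm]

theorem LipschitzWith.eLpNorm_integral_comp_sub_mul_comp_sub_le [μ.IsNegInvariant] {W : G → ℝ}
    (hW : Integrable W μ) {Φ : ℝ → ℝ} {K : ℝ≥0} (hΦ : LipschitzWith K Φ) {C : ℝ}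
    (hΦC : ∀ t, ‖Φ t‖ ≤ C) {u v : G → ℝ} (hu : AEStronglyMeasurable u μ)
    (hv : AEStronglyMeasurable v μ) {p : ℝ≥0∞} (hp : 1 ≤ p) :
    eLpNorm (fun x => (∫ y, W (x - y) * Φ (u y) ∂μ) - ∫ y, W (x - y) * Φ (v y) ∂μ) p μ ≤
      K * eLpNorm W 1 μ * eLpNorm (fun x => u x - v x) p μ := by
  have hΦu := hΦ.continuous.comp_aestronglyMeasurable hu
  have hΦv := hΦ.continuous.comp_aestronglyMeasurable hv
  have hint : ∀ {w : G → ℝ}, AEStronglyMeasurable (Φ ∘ w) μ → ∀ x,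
      Integrable (fun y => W (x - y) * Φ (w y)) μ := fun hw x =>
    (hW.comp_sub_left x).mul_bdd hw (.of_forall fun y => hΦC _)
  have hlin : (fun x => (∫ y, W (x - y) * Φ (u y) ∂μ) - ∫ y, W (x - y) * Φ (v y) ∂μ) =
      fun x => ∫ y, W (x - y) * (Φ (u y) - Φ (v y)) ∂μ := funext fun x => by
    rw [← integral_sub (hint hΦu x) (hint hΦv x)]
    simp only [mul_sub]
  have hΦuv : eLpNorm (fun y => Φ (u y) - Φ (v y)) p μ ≤ K * eLpNorm (fun x => u x - v x) p μ :=
    eLpNorm_le_nnreal_smul_eLpNorm_of_ae_le_mul' (.of_forall fun y => by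
      simpa only [edist_eq_enorm_sub] using hΦ.edist_le_mul (u y) (v y)) p
  calc _ = eLpNorm (fun x => ∫ y, W (x - y) * (Φ (u y) - Φ (v y)) ∂μ) p μ := by rw [hlin]
    _ ≤ eLpNorm W 1 μ * eLpNorm (fun y => Φ (u y) - Φ (v y)) p μ :=
      eLpNorm_integral_comp_sub_mul_le hW.1 (hΦu.sub hΦv) hp
    _ ≤ eLpNorm W 1 μ * (K * eLpNorm (fun x => u x - v x) p μ) := by gcongr
    _ = K * eLpNorm W 1 μ * eLpNorm (fun x => u x - v x) p μ := by ring

end Convolution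

theorem lipschitzWith_sigmoid : LipschitzWith 4⁻¹ sigmoid := by
  refine lipschitzWith_of_nnnorm_deriv_le differentiable_sigmoid fun x => ?_
  have h0 := sigmoid_pos x
  have h1 := sigmoid_lt_one x
  rw [deriv_sigmoid, ← NNReal.coe_le_coe, coe_nnnorm, Real.norm_of_nonneg (by nlinarith)]
  push_cast
  nlinarith [sq_nonneg (2 * sigmoid x - 1)]

theorem stmt5_general (W : EuclideanSpace ℝ (Fin 2) → ℝ) (hW : Integrable W)
    (μ θ : ℝ) (hμ : 0 < μ)
    (S : ℝ → ℝ)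
    (hS : ∀ u, S u = 1 / (1 + Real.exp (-μ * u + θ)) - 1 / (1 + Real.exp θ)) :
    ∀ p : ℝ≥0∞, 1 ≤ p →
      ∀ u v : EuclideanSpace ℝ (Fin 2) → ℝ, Measurable u → Measurable v →
        eLpNorm (fun x => (∫ y, W (x - y) * S (u y)) - ∫ y, W (x - y) * S (v y)) p volume ≤
          ENNReal.ofReal (μ / 4) * eLpNorm W 1 volume *
            eLpNorm (fun x => u x - v x) p volume := by
  intro p hp u v hu hv
  have hS_sigmoid : ∀ t, S t = sigmoid (μ * t - θ) - sigmoid (-θ) := fun t => by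
    rw [hS, sigmoid_def, sigmoid_def, neg_neg, neg_sub, one_div, one_div, neg_mul, neg_add_eq_sub]
  have hS_lip : LipschitzWith (μ / 4).toNNReal S := .of_dist_le_mul fun a b => by
    rw [hS_sigmoid, hS_sigmoid, dist_sub_right, Real.coe_toNNReal _ (by positivity)]
    calc dist (sigmoid (μ * a - θ)) (sigmoid (μ * b - θ))
        ≤ 4⁻¹ * dist (μ * a - θ) (μ * b - θ) := by
          exact_mod_cast lipschitzWith_sigmoid.dist_le_mul _ _
      _ = μ / 4 * dist a b := by
          rw [Real.dist_eq, Real.dist_eq, sub_sub_sub_cancel_right, ← mul_sub,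
            abs_mul, abs_of_pos hμ]
          ring
  have hS_bdd : ∀ t, ‖S t‖ ≤ 1 := fun t => by
    rw [hS_sigmoid, Real.norm_eq_abs, abs_le]
    constructor <;> linarith [sigmoid_pos (μ * t - θ), sigmoid_lt_one (μ * t - θ),
      sigmoid_pos (-θ), sigmoid_lt_one (-θ)]
  exact hS_lip.eLpNorm_integral_comp_sub_mul_comp_sub_le hW hS_bdd hu.aestronglyMeasurable
    hv.aestronglyMeasurable hp

/-- For integrable `W : ℝ² → ℝ` and the firing-rate function `S`
(with `μ, θ > 0`), for every `p ∈ [1, ∞]` and all measurable `u, v : ℝ² → ℝ`,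
`‖W ⋆ (S∘u) − W ⋆ (S∘v)‖_{L^p} ≤ (μ/4) ‖W‖_{L¹} ‖u − v‖_{L^p}` (in `ℝ≥0∞`, so the
convention about infinite right-hand sides is automatic); i.e. `u ↦ W ⋆ (S∘u)` is
globally Lipschitz on `L^p(ℝ²)` with constant `(μ/4)‖W‖_{L¹}`. -/
theorem stmt5 (W : EuclideanSpace ℝ (Fin 2) → ℝ) (hW : Integrable W)
    (μ θ : ℝ) (hμ : 0 < μ) (hθ : 0 < θ)
    (S : ℝ → ℝ)
    (hS : ∀ u, S u = 1 / (1 + Real.exp (-μ * u + θ)) - 1 / (1 + Real.exp θ)) :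
    ∀ p : ℝ≥0∞, 1 ≤ p →
      ∀ u v : EuclideanSpace ℝ (Fin 2) → ℝ, Measurable u → Measurable v →
        eLpNorm (fun x => (∫ y, W (x - y) * S (u y)) - ∫ y, W (x - y) * S (v y)) p volume ≤
          ENNReal.ofReal (μ / 4) * eLpNorm W 1 volume *
            eLpNorm (fun x => u x - v x) p volume :=
  stmt5_general W hW μ θ hμ S hS
end

section
/- Let W : ℝ² → ℝ be integrable, let μ, θ > 0 and let S be the firing-rate function, and let g : ℝ² → ℝ be bounded. If a bounded measurable function u : ℝ² → ℝ is a stationary solution of the neural field equation, i.e. u(x) = ∫_{ℝ²} W(x − y) S(u(y)) dy + g(x) for all x ∈ ℝ², then it obeys the a priori bound sup_x |u(x)| ≤ (e^{θ}/(1 + e^{θ})) ∫_{ℝ²} |W| + sup_x |g(x)|. -/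
open MeasureTheory Real

/-!
Since `0 < 1 / (1 + e^t) < 1`, the firing rate takes values in
`(-1 / (1 + e^θ), e^θ / (1 + e^θ))`, and for `θ ≥ 0` the upper end is the larger in absolute
value. Hence the convolution term is bounded by `e^θ / (1 + e^θ) ∫ |W|` at every point, by
translation invariance of Lebesgue measure, and the bound on `u` follows from the equation.
-/

lemma abs_one_div_one_add_exp_sub_le {θ : ℝ} (hθ : 0 ≤ θ) (t : ℝ) :
    |1 / (1 + exp t) - 1 / (1 + exp θ)| ≤ exp θ / (1 + exp θ) := by
  have ht : 1 / (1 + exp t) ≤ 1 := by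
    rw [div_le_one (by positivity)]
    linarith [exp_pos t]
  have ht₀ : 0 ≤ 1 / (1 + exp t) := by positivity
  have hθ_le : 1 / (1 + exp θ) ≤ exp θ / (1 + exp θ) := by
    gcongr
    exact one_le_exp hθ
  have hsum : 1 / (1 + exp θ) + exp θ / (1 + exp θ) = 1 := by
    field_simp
  rw [abs_le]
  constructor <;> linarith

lemma abs_integral_mul_le_of_abs_le {α : Type*} [MeasurableSpace α] {ν : Measure α}
    {f h : α → ℝ} {c : ℝ} (hf : Integrable f ν) (hh : ∀ x, |h x| ≤ c) :
    |∫ x, f x * h x ∂ν| ≤ c * ∫ x, |f x| ∂ν := by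
  rw [← integral_const_mul]
  refine norm_integral_le_of_norm_le (f := fun x => f x * h x) (hf.abs.const_mul c)
    (.of_forall fun x => ?_)
  rw [Real.norm_eq_abs, abs_mul, mul_comm c]
  exact mul_le_mul_of_nonneg_left (hh x) (abs_nonneg _)

lemma abs_integral_sub_mul_le_of_abs_le {G : Type*} [AddCommGroup G] [MeasurableSpace G]
    [MeasurableAdd G] [MeasurableNeg G] {ν : Measure G} [ν.IsAddLeftInvariant]
    [ν.IsNegInvariant] {W h : G → ℝ} {c : ℝ} (hW : Integrable W ν) (hh : ∀ y, |h y| ≤ c)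
    (x : G) :
    |∫ y, W (x - y) * h y ∂ν| ≤ c * ∫ y, |W y| ∂ν := by
  calc |∫ y, W (x - y) * h y ∂ν| ≤ c * ∫ y, |W (x - y)| ∂ν :=
        abs_integral_mul_le_of_abs_le (hW.comp_sub_left x) hh
    _ = c * ∫ y, |W y| ∂ν := by rw [integral_sub_left_eq_self (fun y => |W y|) ν x]

theorem stmt6_general (W : EuclideanSpace ℝ (Fin 2) → ℝ) (hW : Integrable W)
    (μ θ : ℝ) (hθ : 0 < θ)
    (S : ℝ → ℝ)
    (hS : ∀ u, S u = 1 / (1 + Real.exp (-μ * u + θ)) - 1 / (1 + Real.exp θ))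
    (g u : EuclideanSpace ℝ (Fin 2) → ℝ)
    (hg : ∃ C, ∀ x, |g x| ≤ C)
    (heq : ∀ x, u x = (∫ y, W (x - y) * S (u y)) + g x) :
    (⨆ x, |u x|) ≤ Real.exp θ / (1 + Real.exp θ) * (∫ y, |W y|) + ⨆ x, |g x| := by
  have hS_le (v : ℝ) : |S v| ≤ exp θ / (1 + exp θ) := by
    rw [hS]
    exact abs_one_div_one_add_exp_sub_le hθ.le _
  obtain ⟨C, hC⟩ := hg
  have hg_bdd : BddAbove (Set.range fun x => |g x|) := ⟨C, by rintro _ ⟨x, rfl⟩; exact hC x⟩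
  refine ciSup_le fun x => ?_
  calc |u x| ≤ |∫ y, W (x - y) * S (u y)| + |g x| := by
        rw [heq x]
        exact abs_add_le _ _
    _ ≤ exp θ / (1 + exp θ) * (∫ y, |W y|) + ⨆ x, |g x| :=
        add_le_add (abs_integral_sub_mul_le_of_abs_le hW (fun y => hS_le (u y)) x)
          (le_ciSup hg_bdd x)

/-- A priori bound for bounded measurable stationary solutions of the
neural field equation `u(x) = ∫ W(x−y) S(u(y)) dy + g(x)` with integrable `W`, bounded `g`:
`sup_x |u(x)| ≤ (e^θ/(1+e^θ)) ∫ |W| + sup_x |g(x)|`. -/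
theorem stmt6 (W : EuclideanSpace ℝ (Fin 2) → ℝ) (hW : Integrable W)
    (μ θ : ℝ) (hμ : 0 < μ) (hθ : 0 < θ)
    (S : ℝ → ℝ)
    (hS : ∀ u, S u = 1 / (1 + Real.exp (-μ * u + θ)) - 1 / (1 + Real.exp θ))
    (g u : EuclideanSpace ℝ (Fin 2) → ℝ)
    (hg : ∃ C, ∀ x, |g x| ≤ C)
    (hub : ∃ C, ∀ x, |u x| ≤ C) (hum : Measurable u)
    (heq : ∀ x, u x = (∫ y, W (x - y) * S (u y)) + g x) :
    (⨆ x, |u x|) ≤ Real.exp θ / (1 + Real.exp θ) * (∫ y, |W y|) + ⨆ x, |g x| :=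
  stmt6_general W hW μ θ hθ S hS g u hg heq
end

section
/- Let W : ℝ² → ℝ be integrable, let μ, θ > 0 with firing-rate function S, and let g : ℝ² → ℝ. Suppose u : [0,∞) × ℝ² → ℝ is such that u(t,·) is measurable for each t and, for a fixed x ∈ ℝ², the map t ↦ u(t,x) is differentiable on [0,∞) with ∂_t u(t,x) = −u(t,x) + ∫_{ℝ²} W(x − y) S(u(t,y)) dy + g(x) for all t ≥ 0. Then for all t ≥ 0, |u(t,x)| ≤ e^{-t} |u(0,x)| + (1 − e^{-t}) ( (e^{θ}/(1 + e^{θ})) ∫_{ℝ²} |W| + |g(x)| ). In particular the dynamics are dissipative: lim sup_{t→∞} |u(t,x)| ≤ (e^{θ}/(1+e^{θ})) ‖W‖_{L¹} + |g(x)|. -/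
open MeasureTheory Real Filter Set Topology

/-! The forcing term of the equation is bounded uniformly in time: `S` takes values in
`(-1/(1+e^θ), e^θ/(1+e^θ))` and the convolution with `W` costs a factor `‖W‖_{L¹}`.
Hence `±u(·,x)` satisfies the differential inequality `f' ≤ -f + C`, and Gronwall's lemma
with rate `-1` gives the pointwise bound, whose right-hand side tends to `C`. -/

lemma abs_logistic_sub_logistic_le {θ : ℝ} (hθ : 0 ≤ θ) (a : ℝ) :
    |1 / (1 + exp a) - 1 / (1 + exp θ)| ≤ exp θ / (1 + exp θ) := by
  have hpos : 0 < 1 / (1 + exp a) := by positivity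
  have hle_one : 1 / (1 + exp a) ≤ 1 := by
    rw [div_le_one (by positivity)]
    linarith [exp_pos a]
  have hθ_le : 1 / (1 + exp θ) ≤ exp θ / (1 + exp θ) :=
    div_le_div_of_nonneg_right (one_le_exp hθ) (by positivity)
  have hcompl : 1 - 1 / (1 + exp θ) = exp θ / (1 + exp θ) := by
    field_simp
    ring
  rw [abs_le]
  constructor <;> linarith

lemma abs_integral_mul_le_of_abs_le_s10 {G : Type*} [AddGroup G] [MeasurableSpace G]
    [MeasurableAdd G] [MeasurableNeg G] {ν : Measure G} [ν.IsAddLeftInvariant]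
    [ν.IsNegInvariant] {W h : G → ℝ} (hW : Integrable W ν) {K : ℝ} (hh : ∀ y, |h y| ≤ K)
    (x : G) :
    |∫ y, W (x - y) * h y ∂ν| ≤ K * ∫ y, |W y| ∂ν :=
  calc |∫ y, W (x - y) * h y ∂ν|
      ≤ ∫ y, K * |W (x - y)| ∂ν := by
        refine norm_integral_le_of_norm_le (f := fun y => W (x - y) * h y) ((hW.comp_sub_left x).abs.const_mul K)
          (Eventually.of_forall fun y => ?_)
        rw [Real.norm_eq_abs, abs_mul, mul_comm]
        exact mul_le_mul_of_nonneg_right (hh y) (abs_nonneg _)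
    _ = K * ∫ y, |W y| ∂ν := by
        rw [integral_const_mul, integral_sub_left_eq_self (fun y => |W y|) ν x]

lemma le_exp_neg_mul_add_of_deriv_le {f f' : ℝ → ℝ} {C : ℝ}
    (hf : ∀ t, 0 ≤ t → HasDerivWithinAt f (f' t) (Ici 0) t)
    (bound : ∀ t, 0 ≤ t → f' t ≤ -f t + C) {t : ℝ} (ht : 0 ≤ t) :
    f t ≤ exp (-t) * f 0 + (1 - exp (-t)) * C := by
  have hcont : ContinuousOn f (Icc 0 t) := fun s hs =>
    (hf s hs.1).continuousWithinAt.mono Icc_subset_Ici_self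
  have key := le_gronwallBound_of_liminf_deriv_right_le (K := -1) (ε := C) hcont
    (fun s hs r hr => ((hf s hs.1).mono (Ici_subset_Ici.2 hs.1)).liminf_right_slope_le hr)
    le_rfl (fun s hs => by linarith [bound s hs.1]) t ⟨ht, le_rfl⟩
  rw [gronwallBound_of_K_ne_0 (by norm_num)] at key
  convert key using 1
  simp only [sub_zero, neg_one_mul]
  ring

lemma abs_le_of_hasDerivWithinAt_of_abs_add_le {f f' : ℝ → ℝ} {C : ℝ}
    (hf : ∀ t, 0 ≤ t → HasDerivWithinAt f (f' t) (Ici 0) t)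
    (hforcing : ∀ t, 0 ≤ t → |f' t + f t| ≤ C) {t : ℝ} (ht : 0 ≤ t) :
    |f t| ≤ exp (-t) * |f 0| + (1 - exp (-t)) * C := by
  have upper := le_exp_neg_mul_add_of_deriv_le (C := C) hf
    (fun s hs => by linarith [(abs_le.1 (hforcing s hs)).2]) ht
  have lower := le_exp_neg_mul_add_of_deriv_le (f := fun s => -f s) (C := C) (fun s hs => (hf s hs).neg)
    (fun s hs => by linarith [(abs_le.1 (hforcing s hs)).1]) ht
  have hexp : 0 ≤ exp (-t) := (exp_pos _).le
  rw [abs_le]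
  constructor <;> nlinarith [le_abs_self (f 0), neg_abs_le (f 0)]

lemma limsup_le_of_le_exp_neg_mul_add {v : ℝ → ℝ} {a C : ℝ} (hv : ∀ t, 0 ≤ v t)
    (h : ∀ t, 0 ≤ t → v t ≤ exp (-t) * a + (1 - exp (-t)) * C) :
    limsup v atTop ≤ C := by
  have hexp : Tendsto (fun t : ℝ => exp (-t)) atTop (𝓝 0) :=
    tendsto_exp_atBot.comp tendsto_neg_atTop_atBot
  have hlim : Tendsto (fun t => exp (-t) * a + (1 - exp (-t)) * C) atTop (𝓝 C) := by
    simpa using (hexp.mul_const a).add (((tendsto_const_nhds (x := (1 : ℝ))).sub hexp).mul_const C)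
  calc limsup v atTop ≤ limsup (fun t => exp (-t) * a + (1 - exp (-t)) * C) atTop :=
        limsup_le_limsup (eventually_atTop.2 ⟨0, h⟩)
          (isBoundedUnder_of ⟨0, hv⟩).isCoboundedUnder_le hlim.isBoundedUnder_le
    _ = C := hlim.limsup_eq

theorem stmt10_general (W : EuclideanSpace ℝ (Fin 2) → ℝ) (hW : Integrable W)
    (μ θ : ℝ) (hθ : 0 < θ)
    (S : ℝ → ℝ)
    (hS : ∀ v, S v = 1 / (1 + Real.exp (-μ * v + θ)) - 1 / (1 + Real.exp θ))
    (g : EuclideanSpace ℝ (Fin 2) → ℝ)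
    (u : ℝ → EuclideanSpace ℝ (Fin 2) → ℝ)
    (x : EuclideanSpace ℝ (Fin 2))
    (hderiv : ∀ t : ℝ, 0 ≤ t →
      HasDerivWithinAt (fun s => u s x)
        (-(u t x) + (∫ y, W (x - y) * S (u t y)) + g x) (Set.Ici (0 : ℝ)) t) :
    (∀ t : ℝ, 0 ≤ t →
      |u t x| ≤ Real.exp (-t) * |u 0 x| +
        (1 - Real.exp (-t)) *
          (Real.exp θ / (1 + Real.exp θ) * (∫ y, |W y|) + |g x|)) ∧
    limsup (fun t => |u t x|) atTop ≤
      Real.exp θ / (1 + Real.exp θ) * (∫ y, |W y|) + |g x| := by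
  have hS_le : ∀ v, |S v| ≤ exp θ / (1 + exp θ) := fun v => by
    rw [hS]
    exact abs_logistic_sub_logistic_le hθ.le _
  have hforcing : ∀ t, 0 ≤ t → |(-(u t x) + (∫ y, W (x - y) * S (u t y)) + g x) + u t x| ≤
      exp θ / (1 + exp θ) * (∫ y, |W y|) + |g x| := fun t _ => by
    have hcancel : -(u t x) + (∫ y, W (x - y) * S (u t y)) + g x + u t x =
        (∫ y, W (x - y) * S (u t y)) + g x := by ring
    rw [hcancel]
    exact (abs_add_le _ _).trans <| add_le_add_left
      (abs_integral_mul_le_of_abs_le_s10 hW (fun y => hS_le (u t y)) x) _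
  have hbound := fun t (ht : 0 ≤ t) => abs_le_of_hasDerivWithinAt_of_abs_add_le hderiv hforcing ht
  exact ⟨hbound, limsup_le_of_le_exp_neg_mul_add (fun _ => abs_nonneg _) hbound⟩

/-- Pointwise dissipativity bound: if, at a fixed `x`, `t ↦ u(t,x)` is
differentiable on `[0,∞)` with
`∂_t u(t,x) = −u(t,x) + ∫ W(x−y) S(u(t,y)) dy + g(x)` (with `W` integrable, `u(t,·)`
measurable for each `t`), then for all `t ≥ 0`
`|u(t,x)| ≤ e^{-t}|u(0,x)| + (1 − e^{-t})((e^θ/(1+e^θ)) ∫|W| + |g(x)|)`, and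
`limsup_{t→∞} |u(t,x)| ≤ (e^θ/(1+e^θ)) ‖W‖_{L¹} + |g(x)|`. -/
theorem stmt10 (W : EuclideanSpace ℝ (Fin 2) → ℝ) (hW : Integrable W)
    (μ θ : ℝ) (hμ : 0 < μ) (hθ : 0 < θ)
    (S : ℝ → ℝ)
    (hS : ∀ v, S v = 1 / (1 + Real.exp (-μ * v + θ)) - 1 / (1 + Real.exp θ))
    (g : EuclideanSpace ℝ (Fin 2) → ℝ)
    (u : ℝ → EuclideanSpace ℝ (Fin 2) → ℝ)
    (x : EuclideanSpace ℝ (Fin 2))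
    (hmeas : ∀ t, Measurable (u t))
    (hderiv : ∀ t : ℝ, 0 ≤ t →
      HasDerivWithinAt (fun s => u s x)
        (-(u t x) + (∫ y, W (x - y) * S (u t y)) + g x) (Set.Ici (0 : ℝ)) t) :
    (∀ t : ℝ, 0 ≤ t →
      |u t x| ≤ Real.exp (-t) * |u 0 x| +
        (1 - Real.exp (-t)) *
          (Real.exp θ / (1 + Real.exp θ) * (∫ y, |W y|) + |g x|)) ∧
    limsup (fun t => |u t x|) atTop ≤
      Real.exp θ / (1 + Real.exp θ) * (∫ y, |W y|) + |g x| :=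
  stmt10_general W hW μ θ hθ S hS g u x hderiv
end

section
/- Let A, C, D, M ∈ ℝ and B > 0, and let W₈ : ℝ² → ℝ be integrable with Fourier transform ŵ₈(k) = ∫_{ℝ²} W₈(x) e^{-i⟨k,x⟩} dx equal to −A(‖k‖² − C)(‖k‖² − D)/(B + (‖k‖² − M)⁴) for every k ∈ ℝ². Then for every Schwartz function f : ℝ² → ℝ, the eighth-order identity B (W₈ ⋆ f) + (M + Δ)⁴ (W₈ ⋆ f) = −A (Δ + C)(Δ + D) f holds everywhere on ℝ², where (M + Δ)⁴ denotes the four-fold composition of the operator g ↦ M g + Δg, and (Δ + C)(Δ + D) f = Δ(Δf) + (C + D) Δf + C D f. -/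
open MeasureTheory

/-- The Euclidean Laplacian `Δg = ∂²g/∂x₁² + ∂²g/∂x₂²` on `ℝ²`, expressed via iterated
Fréchet derivatives in the coordinate directions. -/
noncomputable def lap (g : EuclideanSpace ℝ (Fin 2) → ℝ) :
    EuclideanSpace ℝ (Fin 2) → ℝ :=
  fun x => ∑ i : Fin 2,
    fderiv ℝ (fun y => fderiv ℝ g y (EuclideanSpace.single i (1 : ℝ))) x
      (EuclideanSpace.single i (1 : ℝ))

/-- The Helmholtz-type operator `g ↦ M g + Δ g`; its 4-fold iterate is `(M + Δ)⁴`. -/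
noncomputable def helmholtz (M : ℝ) (g : EuclideanSpace ℝ (Fin 2) → ℝ) :
    EuclideanSpace ℝ (Fin 2) → ℝ :=
  fun x => M * g x + lap g x

/-! Differentiation under the integral shows that convolution with an integrable kernel `W`
commutes with the Laplacian on Schwartz functions, so the left-hand side is `W ⋆ P(Δ) f` with
`P(X) = B + (M + X)⁴`, and the right-hand side is `Q(Δ) f` with `Q(X) = -A (X + C) (X + D)`.
Under the Fourier transform `Δ` becomes multiplication by `-4π²‖ξ‖²`, and the hypothesis on `ŵ`
says exactly `ŵ · P(-4π²‖ξ‖²) = Q(-4π²‖ξ‖²)`. As `W ⋆ P(Δ) f` is continuous and integrable with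
integrable Fourier transform, Fourier inversion gives `W ⋆ P(Δ) f = Q(Δ) f`. -/

open SchwartzMap FourierTransform LineDeriv Laplacian ContinuousLinearMap Convolution
open scoped Real

namespace SchwartzMap

section NormedSpace

variable {E F G : Type*} [NormedAddCommGroup E] [NormedSpace ℝ E]
  [NormedAddCommGroup F] [NormedSpace ℝ F] [NormedAddCommGroup G] [NormedSpace ℝ G]

theorem bddAbove_range_norm (g : 𝓢(E, F)) : BddAbove (Set.range fun x => ‖g x‖) :=
  ⟨SchwartzMap.seminorm ℝ 0 0 g, by rintro _ ⟨x, rfl⟩; exact g.norm_le_seminorm ℝ x⟩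

theorem hasFDerivAt_comp_sub_const (g : 𝓢(E, F)) (x t : E) :
    HasFDerivAt (fun y => g (y - t)) (fderiv ℝ g (x - t)) x := by
  simpa [Function.comp_def] using (g.hasFDerivAt (x - t)).comp x ((hasFDerivAt_id x).sub_const t)

theorem lineDerivOp_postcompCLM (L : F →L[ℝ] G) (u : 𝓢(E, F)) (m : E) :
    ∂_{m} (postcompCLM L u) = postcompCLM L (∂_{m} u) := by
  ext x
  have : HasFDerivAt (postcompCLM L u) (L.comp (fderiv ℝ u x)) x :=
    L.hasFDerivAt.comp x (u.hasFDerivAt x)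
  simp [lineDerivOp_apply_eq_fderiv, this.fderiv]

end NormedSpace

section InnerProductSpace

variable {E F G : Type*} [NormedAddCommGroup E] [InnerProductSpace ℝ E] [FiniteDimensional ℝ E]
  [NormedAddCommGroup F] [NormedSpace ℝ F] [NormedAddCommGroup G] [NormedSpace ℝ G]

theorem postcompCLM_laplacian (L : F →L[ℝ] G) (u : 𝓢(E, F)) :
    postcompCLM L (Δ u) = Δ (postcompCLM L u) := by
  simp_rw [laplacian_eq_sum (stdOrthonormalBasis ℝ E), lineDerivOp_postcompCLM, map_sum]

theorem postcompCLM_iterate_helmholtz (L : F →L[ℝ] G) (M : ℝ) (n : ℕ) (u : 𝓢(E, F)) :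
    postcompCLM L ((fun v : 𝓢(E, F) => M • v + Δ v)^[n] u) =
      (fun v : 𝓢(E, G) => M • v + Δ v)^[n] (postcompCLM L u) :=
  Function.Semiconj.iterate_right (fun v => by simp [postcompCLM_laplacian]) n u

end InnerProductSpace

section Fourier

variable {E F : Type*} [NormedAddCommGroup E] [InnerProductSpace ℝ E] [FiniteDimensional ℝ E]
  [MeasurableSpace E] [BorelSpace E] [NormedAddCommGroup F] [NormedSpace ℂ F] [CompleteSpace F]

theorem fourier_laplacian_apply (u : 𝓢(E, F)) (ξ : E) :
    𝓕 (Δ u) ξ = (-(2 * π) ^ 2 * ‖ξ‖ ^ 2 : ℝ) • 𝓕 u ξ := by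
  have : (fun x : E => ‖x‖ ^ 2).HasTemperateGrowth := by fun_prop
  rw [laplacian_eq_fourierMultiplierCLM, fourierMultiplierCLM_apply]
  simp [smulLeftCLM_apply_apply this, smul_smul]

theorem fourier_iterate_helmholtz_apply (M : ℝ) (n : ℕ) (u : 𝓢(E, F)) (ξ : E) :
    𝓕 ((fun v : 𝓢(E, F) => M • v + Δ v)^[n] u) ξ =
      ((M - (2 * π) ^ 2 * ‖ξ‖ ^ 2) ^ n : ℝ) • 𝓕 u ξ := by
  induction n with
  | zero => simp
  | succ n ih =>
    rw [Function.iterate_succ_apply', FourierTransform.fourier_add, FourierTransform.fourier_smul,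
      add_apply, smul_apply, fourier_laplacian_apply, ih, smul_smul, smul_smul, ← add_smul]
    congr 1
    ring

end Fourier

end SchwartzMap

namespace MeasureTheory.Integrable

section Convolution

variable {E F : Type*} [NormedAddCommGroup E] [MeasurableSpace E] [BorelSpace E]
  [SecondCountableTopology E] [NormedAddCommGroup F] [NormedSpace ℝ F]
  {μ : Measure E} [μ.IsAddLeftInvariant] [SFinite μ] {W : E → ℝ}

theorem convolutionExistsAt_of_bddAbove (hW : Integrable W μ) {g : E → F}
    (hb : BddAbove (Set.range fun x => ‖g x‖)) (hg : Continuous g) (x : E) :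
    ConvolutionExistsAt W g x (lsmul ℝ ℝ) μ :=
  BddAbove.convolutionExistsAt _ (hb.mono (Set.image_subset_range _ _)) MeasurableSet.univ
    (Set.subset_univ _) hW.integrableOn hg.aestronglyMeasurable

variable [NormedSpace ℝ E]

theorem hasFDerivAt_convolution_schwartz (hW : Integrable W μ) (g : 𝓢(E, F)) (x : E) :
    HasFDerivAt (W ⋆[lsmul ℝ ℝ, μ] g) ((W ⋆[lsmul ℝ ℝ, μ] fderiv ℝ g) x) x := by
  have hDg := (fderivCLM ℝ E F g).bddAbove_range_norm
  have hg := hW.convolutionExistsAt_of_bddAbove g.bddAbove_range_norm g.continuous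
  have hg' := hW.convolutionExistsAt_of_bddAbove hDg (fderivCLM ℝ E F g).continuous x
  obtain ⟨C, hC⟩ := hDg
  refine hasFDerivAt_integral_of_dominated_of_fderiv_le (bound := fun t => ‖W t‖ * C)
    Filter.univ_mem (.of_forall fun y => (hg y).integrable.aestronglyMeasurable)
    (hg x).integrable hg'.integrable.aestronglyMeasurable (.of_forall fun t y _ => ?_)
    (hW.norm.mul_const C)
    (.of_forall fun t y _ => (g.hasFDerivAt_comp_sub_const y t).const_smul (W t))
  rw [norm_smul]
  exact mul_le_mul_of_nonneg_left (hC ⟨y - t, rfl⟩) (norm_nonneg _)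

noncomputable def convolutionSchwartz (hW : Integrable W μ) : 𝓢(E, F) →ₗ[ℝ] E → F where
  toFun g := W ⋆[lsmul ℝ ℝ, μ] g
  map_add' g h := funext fun x =>
    (hW.convolutionExistsAt_of_bddAbove g.bddAbove_range_norm g.continuous x).distrib_add
      (hW.convolutionExistsAt_of_bddAbove h.bddAbove_range_norm h.continuous x)
  map_smul' _ _ := convolution_smul

theorem convolutionSchwartz_apply (hW : Integrable W μ) (g : 𝓢(E, F)) :
    hW.convolutionSchwartz g = W ⋆[lsmul ℝ ℝ, μ] g :=
  rfl

theorem fderiv_convolutionSchwartz_apply (hW : Integrable W μ) (g : 𝓢(E, F)) (x m : E) :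
    fderiv ℝ (hW.convolutionSchwartz g) x m = hW.convolutionSchwartz (∂_{m} g) x := by
  have hDg : Integrable (fun t => W t • fderiv ℝ g (x - t)) μ :=
    (hW.convolutionExistsAt_of_bddAbove (fderivCLM ℝ E F g).bddAbove_range_norm
      (fderivCLM ℝ E F g).continuous x).integrable
  rw [convolutionSchwartz_apply, (hW.hasFDerivAt_convolution_schwartz g x).fderiv,
    convolution_lsmul, integral_apply hDg]
  rfl

end Convolution

section Fourier

variable {E : Type*} [NormedAddCommGroup E] [InnerProductSpace ℝ E] [FiniteDimensional ℝ E]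
  [MeasurableSpace E] [BorelSpace E]

theorem convolution_eq_of_fourier_mul_eq {W : E → ℂ} (hW : Integrable W)
    {g h : 𝓢(E, ℂ)} (hWgh : ∀ ξ, 𝓕 W ξ * 𝓕 g ξ = 𝓕 h ξ) :
    W ⋆[mul ℂ ℂ] g = h := by
  have hcont : Continuous (W ⋆[mul ℂ ℂ] g) :=
    g.bddAbove_range_norm.continuous_convolution_right_of_integrable _ hW g.continuous
  have hint : Integrable (W ⋆[mul ℂ ℂ] g) := hW.integrable_convolution _ g.integrable
  have hfourier : 𝓕 (W ⋆[mul ℂ ℂ] g) = 𝓕 h := by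
    ext ξ
    rw [Real.fourier_mul_convolution_eq hW g.integrable]
    exact hWgh ξ
  rw [← hcont.fourierInv_fourier_eq hint (hfourier ▸ (𝓕 h).integrable), hfourier,
    ← fourierInv_coe, FourierPair.fourierInv_fourier_eq]

theorem convolutionSchwartz_eq_of_fourier_mul_eq {W : E → ℝ} (hW : Integrable W)
    {g h : 𝓢(E, ℝ)}
    (hWgh : ∀ ξ, 𝓕 (fun x => (W x : ℂ)) ξ * 𝓕 (postcompCLM Complex.ofRealCLM g) ξ =
      𝓕 (postcompCLM Complex.ofRealCLM h) ξ) :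
    hW.convolutionSchwartz g = h := by
  have hWc : Integrable (fun x => (W x : ℂ)) := hW.ofReal
  ext x
  have := congrFun (hWc.convolution_eq_of_fourier_mul_eq hWgh) x
  simp_rw [convolution_mul, postcompCLM_apply, Complex.ofRealCLM_apply, ← Complex.ofReal_mul,
    integral_complex_ofReal, Complex.ofReal_inj] at this
  simpa [convolutionSchwartz_apply, convolution_lsmul] using this

theorem convolutionSchwartz_smul_add_iterate_helmholtz {A B C D M : ℝ} (hB : 0 < B) {W : E → ℝ}
    (hW : Integrable W)
    (hW𝓕 : ∀ ξ : E, 𝓕 (fun x => (W x : ℂ)) ξ =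
      ((-A * ((2 * π) ^ 2 * ‖ξ‖ ^ 2 - C) * ((2 * π) ^ 2 * ‖ξ‖ ^ 2 - D) /
        (B + ((2 * π) ^ 2 * ‖ξ‖ ^ 2 - M) ^ 4) : ℝ) : ℂ))
    (f : 𝓢(E, ℝ)) :
    hW.convolutionSchwartz (B • f + (fun v : 𝓢(E, ℝ) => M • v + Δ v)^[4] f) =
      ⇑((-A) • (Δ (Δ f) + (C + D) • Δ f + (C * D) • f)) := by
  refine hW.convolutionSchwartz_eq_of_fourier_mul_eq fun ξ => ?_
  simp only [map_add, map_smul, postcompCLM_iterate_helmholtz, postcompCLM_laplacian,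
    FourierTransform.fourier_add, FourierTransform.fourier_smul, add_apply, smul_apply,
    fourier_laplacian_apply, fourier_iterate_helmholtz_apply, hW𝓕]
  rw [← add_smul, ← Complex.real_smul, smul_smul, smul_smul, smul_smul, ← add_smul, ← add_smul,
    smul_smul]
  congr 1
  have : B + ((2 * π) ^ 2 * ‖ξ‖ ^ 2 - M) ^ 4 ≠ 0 := by positivity
  field_simp
  ring

end Fourier

end MeasureTheory.Integrable

local notation "ℝ²" => EuclideanSpace ℝ (Fin 2)

theorem lap_schwartz (g : 𝓢(ℝ², ℝ)) : lap g = Δ g := by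
  ext x
  simp_rw [lap, ← lineDerivOp_apply_eq_fderiv,
    laplacian_eq_sum (EuclideanSpace.basisFun (Fin 2) ℝ), EuclideanSpace.basisFun_apply,
    _root_.sum_apply]

namespace MeasureTheory.Integrable

variable {W : ℝ² → ℝ} (hW : Integrable W)
include hW

theorem lap_convolutionSchwartz (g : 𝓢(ℝ², ℝ)) :
    lap (hW.convolutionSchwartz g) = hW.convolutionSchwartz (Δ g) := by
  ext x
  simp_rw [lap, hW.fderiv_convolutionSchwartz_apply,
    laplacian_eq_sum (EuclideanSpace.basisFun (Fin 2) ℝ), EuclideanSpace.basisFun_apply, map_sum,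
    Finset.sum_apply]

theorem iterate_helmholtz_convolutionSchwartz (M : ℝ) (n : ℕ) (g : 𝓢(ℝ², ℝ)) :
    (helmholtz M)^[n] (hW.convolutionSchwartz g) =
      hW.convolutionSchwartz ((fun v : 𝓢(ℝ², ℝ) => M • v + Δ v)^[n] g) := by
  refine (Function.Semiconj.iterate_right (fun v => ?_) n g).symm
  ext x
  simp [helmholtz, hW.lap_convolutionSchwartz]

end MeasureTheory.Integrable

/- The paper's `ŵ(k) = ∫ W x e^{-i⟨k,x⟩} dx` is Mathlib's `𝓕 W` (kernel `e^{-2πi⟨x,ξ⟩}`)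
evaluated at `k = 2πξ`. -/
theorem fourier_eq_integral_mul_exp {E : Type*} [NormedAddCommGroup E] [InnerProductSpace ℝ E]
    [FiniteDimensional ℝ E] [MeasurableSpace E] [BorelSpace E] (W : E → ℂ) (ξ : E) :
    𝓕 W ξ = ∫ x, W x * Complex.exp (-Complex.I * ((inner ℝ ((2 * π) • ξ) x : ℝ) : ℂ)) := by
  rw [Real.fourier_eq']
  congr 1 with x
  rw [smul_eq_mul, mul_comm, real_inner_smul_left, real_inner_comm]
  push_cast
  ring_nf

/-- If `W₈ : ℝ² → ℝ` is integrable with Fourier transform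
`−A(‖k‖² − C)(‖k‖² − D)/(B + (‖k‖² − M)⁴)` (with `B > 0`), then for every Schwartz
function `f` the eighth-order identity
`B (W₈ ⋆ f) + (M + Δ)⁴ (W₈ ⋆ f) = −A (Δ + C)(Δ + D) f` holds everywhere on `ℝ²`, where
`(M + Δ)⁴` is the four-fold composition of `g ↦ M g + Δg` and
`(Δ + C)(Δ + D) f = Δ(Δf) + (C + D) Δf + C D f`. -/
theorem stmt13 (A C D M B : ℝ) (hB : 0 < B)
    (W₈ : EuclideanSpace ℝ (Fin 2) → ℝ) (hW : Integrable W₈)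
    (hwHat : ∀ k : EuclideanSpace ℝ (Fin 2),
      (∫ x, (W₈ x : ℂ) * Complex.exp (-Complex.I * ((inner ℝ k x : ℝ) : ℂ))) =
        ((-A * (‖k‖ ^ 2 - C) * (‖k‖ ^ 2 - D) / (B + (‖k‖ ^ 2 - M) ^ 4) : ℝ) : ℂ)) :
    ∀ f : SchwartzMap (EuclideanSpace ℝ (Fin 2)) ℝ, ∀ x,
      B * (∫ y, W₈ (x - y) * f y) +
        (helmholtz M)^[4] (fun z => ∫ y, W₈ (z - y) * f y) x =
      -A * (lap (lap (⇑f)) x + (C + D) * lap (⇑f) x + C * D * f x) := by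
  intro f x
  have hW𝓕 : ∀ ξ : ℝ², 𝓕 (fun x => (W₈ x : ℂ)) ξ =
      ((-A * ((2 * π) ^ 2 * ‖ξ‖ ^ 2 - C) * ((2 * π) ^ 2 * ‖ξ‖ ^ 2 - D) /
        (B + ((2 * π) ^ 2 * ‖ξ‖ ^ 2 - M) ^ 4) : ℝ) : ℂ) := fun ξ => by
    rw [fourier_eq_integral_mul_exp, hwHat, norm_smul, mul_pow,
      Real.norm_of_nonneg Real.two_pi_pos.le]
  have hK : ∀ z, ∫ y, W₈ (z - y) * f y = hW.convolutionSchwartz f z := fun z => by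
    simp [Integrable.convolutionSchwartz_apply, convolution_lsmul_swap]
  have hx := congrFun (hW.convolutionSchwartz_smul_add_iterate_helmholtz hB hW𝓕 f) x
  simp only [hK]
  rw [hW.iterate_helmholtz_convolutionSchwartz, lap_schwartz, lap_schwartz]
  simpa only [map_add, map_smul, Pi.add_apply, Pi.smul_apply, smul_apply, add_apply,
    smul_eq_mul] using hx
end

section
/- Let μ, θ > 0 and let S be the firing-rate function S(u) = 1/(1 + e^{-μu + θ}) − 1/(1 + e^{θ}). If u : ℝ² → ℝ is a Schwartz function, then the composition S ∘ u : ℝ² → ℝ is also a Schwartz function. (Key points: S is smooth with all derivatives bounded and S(0) = 0, so S∘u inherits rapid decay of all derivatives from u.) -/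
/-!
`S` is smooth and `u` is bounded, so the derivatives of `S` up to any order are bounded by some
`C` on the range of `u`. For `n ≥ 1`, the Faà di Bruno bound (`‖∂ⁱu(x)‖ ≤ Dⁱ` for `1 ≤ i ≤ n`
implies `‖∂ⁿ(S ∘ u)(x)‖ ≤ n! · C · Dⁿ`) with `D = A / (1 + ‖x‖)ᵏ` transfers the decay of the
derivatives of `u` to `S ∘ u`. For `n = 0` no derivative of `u` carries decay; instead `S 0 = 0`
and the mean value theorem give `|S (u x)| ≤ C |u x|`.
-/

open scoped ContDiff Nat
open Metric

variable {E F G : Type*} [NormedAddCommGroup E] [NormedSpace ℝ E]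
  [NormedAddCommGroup F] [NormedSpace ℝ F] [NormedAddCommGroup G] [NormedSpace ℝ G]

theorem IsCompact.exists_bound_iteratedFDeriv {f : F → G} {N : ℕ} (hf : ContDiff ℝ N f)
    {K : Set F} (hK : IsCompact K) :
    ∃ C, ∀ i ≤ N, ∀ y ∈ K, ‖iteratedFDeriv ℝ i f y‖ ≤ C := by
  have hcont : Continuous fun y => ∑ i ∈ Finset.range (N + 1), ‖iteratedFDeriv ℝ i f y‖ :=
    continuous_finsetSum _ fun i hi =>
      (hf.continuous_iteratedFDeriv (by exact_mod_cast Finset.mem_range_succ_iff.mp hi)).norm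
  obtain ⟨C, hC⟩ := hK.exists_bound_of_continuousOn hcont.continuousOn
  refine ⟨C, fun i hi y hy => le_trans ?_ ((Real.le_norm_self _).trans (hC y hy))⟩
  exact Finset.single_le_sum (f := fun i => ‖iteratedFDeriv ℝ i f y‖)
    (fun _ _ => norm_nonneg _) (Finset.mem_range_succ_iff.mpr hi)

theorem norm_le_mul_norm_of_map_zero {f : F → G} {R C : ℝ}
    (hf : ∀ y ∈ closedBall 0 R, DifferentiableAt ℝ f y) (hf0 : f 0 = 0)
    (hC : ∀ y ∈ closedBall 0 R, ‖fderiv ℝ f y‖ ≤ C) {y : F} (hy : y ∈ closedBall 0 R) :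
    ‖f y‖ ≤ C * ‖y‖ := by
  have h0 : (0 : F) ∈ closedBall 0 R := mem_closedBall_self (nonneg_of_mem_closedBall hy)
  simpa [hf0] using (convex_closedBall (0 : F) R).norm_image_sub_le_of_norm_fderiv_le hf hC h0 hy

theorem norm_pow_mul_norm_iteratedFDeriv_comp_le {f : F → G} {u : E → F} {k n : ℕ}
    (hf : ContDiff ℝ n f) (hu : ContDiff ℝ n u) (hn : 1 ≤ n) {x : E} {A C : ℝ} (hA : 0 ≤ A)
    (hC : ∀ i ≤ n, ‖iteratedFDeriv ℝ i f (u x)‖ ≤ C)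
    (hD : ∀ i, 1 ≤ i → i ≤ n → ‖iteratedFDeriv ℝ i u x‖ ≤ (A / (1 + ‖x‖) ^ k) ^ i) :
    ‖x‖ ^ k * ‖iteratedFDeriv ℝ n (f ∘ u) x‖ ≤ n ! * C * A ^ n := by
  have hC0 : 0 ≤ C := (norm_nonneg _).trans (hC 0 (Nat.zero_le n))
  have hx : ‖x‖ ^ k ≤ (1 + ‖x‖) ^ (k * n) :=
    calc ‖x‖ ^ k ≤ (1 + ‖x‖) ^ k := by gcongr; linarith
      _ ≤ (1 + ‖x‖) ^ (k * n) :=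
        pow_le_pow_right₀ (by linarith [norm_nonneg x]) (Nat.le_mul_of_pos_right k hn)
  calc ‖x‖ ^ k * ‖iteratedFDeriv ℝ n (f ∘ u) x‖
      ≤ ‖x‖ ^ k * (n ! * C * (A / (1 + ‖x‖) ^ k) ^ n) := by
        gcongr
        exact norm_iteratedFDeriv_comp_le hf hu le_rfl x hC hD
    _ = n ! * C * A ^ n * (‖x‖ ^ k / (1 + ‖x‖) ^ (k * n)) := by
        rw [div_pow, ← pow_mul]
        ring
    _ ≤ n ! * C * A ^ n := by
        exact mul_le_of_le_one_right (by positivity) (div_le_one_of_le₀ hx (by positivity))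

namespace SchwartzMap

theorem exists_norm_iteratedFDeriv_le_pow (u : 𝓢(E, F)) (k n : ℕ) :
    ∃ A, 0 ≤ A ∧ ∀ x, ∀ i, 1 ≤ i → i ≤ n →
      ‖iteratedFDeriv ℝ i u x‖ ≤ (A / (1 + ‖x‖) ^ k) ^ i := by
  set B := 2 ^ (k * n) * (Finset.Iic (k * n, n)).sup (fun m => SchwartzMap.seminorm ℝ m.1 m.2) u
  refine ⟨max 1 B, by positivity, fun x i hi hin => ?_⟩
  have hB : (1 + ‖x‖) ^ (k * i) * ‖iteratedFDeriv ℝ i u x‖ ≤ B :=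
    one_add_le_sup_seminorm_apply (m := (k * n, n)) (Nat.mul_le_mul_left k hin) hin u x
  rw [div_pow, ← pow_mul, le_div_iff₀ (by positivity), mul_comm]
  exact hB.trans ((le_max_right 1 B).trans (le_self_pow₀ (le_max_left 1 B) (by omega)))

theorem decay_comp_of_map_zero [ProperSpace F] {f : F → G} (hf : ContDiff ℝ ∞ f) (hf0 : f 0 = 0)
    (u : 𝓢(E, F)) (k n : ℕ) :
    ∃ C, ∀ x, ‖x‖ ^ k * ‖iteratedFDeriv ℝ n (f ∘ u) x‖ ≤ C := by
  have hu : ∀ x, u x ∈ closedBall 0 (SchwartzMap.seminorm ℝ 0 0 u) := fun x => by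
    simpa using u.norm_le_seminorm ℝ x
  have hf_succ : ContDiff ℝ (n + 1 : ℕ) f := hf.of_le (by exact_mod_cast le_top)
  obtain ⟨C, hC⟩ :=
    (isCompact_closedBall (0 : F) (SchwartzMap.seminorm ℝ 0 0 u)).exists_bound_iteratedFDeriv hf_succ
  rcases Nat.eq_zero_or_pos n with rfl | hn
  · have hC0 : 0 ≤ C := (norm_nonneg _).trans (hC 0 (Nat.zero_le 1) _ (hu 0))
    refine ⟨C * SchwartzMap.seminorm ℝ k 0 u, fun x => ?_⟩
    have hfu : ‖f (u x)‖ ≤ C * ‖u x‖ :=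
      norm_le_mul_norm_of_map_zero (fun y _ => (hf.differentiable (by simp)).differentiableAt)
        hf0 (fun y hy => norm_iteratedFDeriv_one (𝕜 := ℝ) f ▸ hC 1 le_rfl y hy) (hu x)
    calc ‖x‖ ^ k * ‖iteratedFDeriv ℝ 0 (f ∘ u) x‖ ≤ ‖x‖ ^ k * (C * ‖u x‖) := by
          rw [norm_iteratedFDeriv_zero]
          gcongr
          exact hfu
      _ = C * (‖x‖ ^ k * ‖u x‖) := by ring
      _ ≤ C * SchwartzMap.seminorm ℝ k 0 u := by gcongr; exact u.norm_pow_mul_le_seminorm ℝ k x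
  · obtain ⟨A, hA, hD⟩ := u.exists_norm_iteratedFDeriv_le_pow k n
    exact ⟨n ! * C * A ^ n, fun x => norm_pow_mul_norm_iteratedFDeriv_comp_le
      (hf.of_le (by exact_mod_cast le_top)) (u.smooth n) hn hA
      (fun i hi => hC i (by omega) _ (hu x)) (hD x)⟩

def compOfMapZero [ProperSpace F] (f : F → G) (hf : ContDiff ℝ ∞ f) (hf0 : f 0 = 0)
    (u : 𝓢(E, F)) : 𝓢(E, G) where
  toFun := f ∘ u
  smooth' := hf.comp u.smooth'
  decay' := decay_comp_of_map_zero hf hf0 u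

end SchwartzMap

theorem stmt14_general (μ θ : ℝ)
    (S : ℝ → ℝ)
    (hS : ∀ u, S u = 1 / (1 + Real.exp (-μ * u + θ)) - 1 / (1 + Real.exp θ))
    (u : SchwartzMap (EuclideanSpace ℝ (Fin 2)) ℝ) :
    ∃ v : SchwartzMap (EuclideanSpace ℝ (Fin 2)) ℝ, ∀ x, v x = S (u x) := by
  have hS_smooth : ContDiff ℝ ∞ S := by
    rw [funext hS]
    exact (contDiff_const.div (contDiff_const.add (by fun_prop))
      fun t => (by positivity : 0 < 1 + Real.exp (-μ * t + θ)).ne').sub contDiff_const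
  have hS0 : S 0 = 0 := by simp [hS]
  exact ⟨SchwartzMap.compOfMapZero S hS_smooth hS0 u, fun _ => rfl⟩

/-- For `μ, θ > 0` and the firing-rate function
`S(u) = 1/(1 + e^{-μu + θ}) − 1/(1 + e^θ)`, the composition of `S` with any Schwartz
function `u : ℝ² → ℝ` is again a Schwartz function. -/
theorem stmt14 (μ θ : ℝ) (hμ : 0 < μ) (hθ : 0 < θ)
    (S : ℝ → ℝ)
    (hS : ∀ u, S u = 1 / (1 + Real.exp (-μ * u + θ)) - 1 / (1 + Real.exp θ))
    (u : SchwartzMap (EuclideanSpace ℝ (Fin 2)) ℝ) :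
    ∃ v : SchwartzMap (EuclideanSpace ℝ (Fin 2)) ℝ, ∀ x, v x = S (u x) :=
  stmt14_general μ θ S hS u
end
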